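/- arXiv:1910.07072 — 2 statements merged into one kernel-verified Lean document; each statement's English description precedes it below -/
import Mathlib

section
/- Let H ≥ 1 be an integer and define α_t = (H+1)/(H+t) for integers t ≥ 1, and for 1 ≤ i ≤ τ set α_τ^i := α_i · ∏_{j=i+1}^{τ} (1 − α_j). Then for every integer τ ≥ 1, Σ_{i=1}^{τ} (α_τ^i)² ≤ 2H/τ. -/
/-!
The weights `α_τ^i` telescope: since `α_1 = 1`, they sum to `1` for every `τ ≥ 1`. Each weight is
at most `α_τ`, by induction on `τ`, because `α_τ (1 - α_{τ+1}) ≤ α_{τ+1}`. Hence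
`Σ (α_τ^i)² ≤ α_τ Σ α_τ^i = α_τ = (H+1)/(H+τ) ≤ 2H/τ`.
-/

open Finset

def stepWeight (a : ℕ → ℝ) (τ i : ℕ) : ℝ :=
  a i * ∏ j ∈ Icc (i + 1) τ, (1 - a j)

namespace stepWeight

variable {a : ℕ → ℝ}

@[simp]
lemma self (τ : ℕ) : stepWeight a τ τ = a τ := by
  simp [stepWeight]

lemma succ {τ i : ℕ} (h : i ≤ τ) :
    stepWeight a (τ + 1) i = stepWeight a τ i * (1 - a (τ + 1)) := by
  rw [stepWeight, stepWeight, prod_Icc_succ_top (by omega), mul_assoc]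

lemma sum_eq_one (h1 : a 1 = 1) {τ : ℕ} (hτ : 1 ≤ τ) :
    ∑ i ∈ Icc 1 τ, stepWeight a τ i = 1 := by
  induction τ, hτ using Nat.le_induction with
  | base => simp [h1]
  | succ τ hτ ih =>
    have hshift : ∑ i ∈ Icc 1 τ, stepWeight a (τ + 1) i
        = (∑ i ∈ Icc 1 τ, stepWeight a τ i) * (1 - a (τ + 1)) := by
      rw [sum_mul]
      exact sum_congr rfl fun i hi => succ (mem_Icc.mp hi).2
    rw [sum_Icc_succ_top (by omega), self, hshift, ih]
    ring

lemma nonneg (ha : ∀ j, 1 ≤ j → a j ∈ Set.Icc 0 1) {τ i : ℕ} (hi : 1 ≤ i) :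
    0 ≤ stepWeight a τ i :=
  mul_nonneg (ha i hi).1 <| prod_nonneg fun j hj =>
    sub_nonneg.mpr (ha j (by grind)).2

lemma le_self (ha1 : ∀ j, 1 ≤ j → a j ≤ 1) (hstep : ∀ t, a t * (1 - a (t + 1)) ≤ a (t + 1))
    {τ i : ℕ} (hi : i ≤ τ) : stepWeight a τ i ≤ a τ := by
  induction τ, hi using Nat.le_induction with
  | base => simp
  | succ τ hiτ ih =>
    rw [succ hiτ]
    calc stepWeight a τ i * (1 - a (τ + 1)) ≤ a τ * (1 - a (τ + 1)) :=
          mul_le_mul_of_nonneg_right ih (sub_nonneg.mpr (ha1 _ (by omega)))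
      _ ≤ a (τ + 1) := hstep τ

lemma sum_sq_le (h1 : a 1 = 1) (ha : ∀ j, 1 ≤ j → a j ∈ Set.Icc 0 1)
    (hstep : ∀ t, a t * (1 - a (t + 1)) ≤ a (t + 1)) {τ : ℕ} (hτ : 1 ≤ τ) :
    ∑ i ∈ Icc 1 τ, stepWeight a τ i ^ 2 ≤ a τ :=
  calc ∑ i ∈ Icc 1 τ, stepWeight a τ i ^ 2
      ≤ ∑ i ∈ Icc 1 τ, stepWeight a τ i * a τ := by
        refine sum_le_sum fun i hi => ?_
        rw [sq]
        exact mul_le_mul_of_nonneg_left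
          (le_self (fun j hj => (ha j hj).2) hstep (mem_Icc.mp hi).2)
          (nonneg ha (mem_Icc.mp hi).1)
    _ = a τ := by rw [← sum_mul, sum_eq_one h1 hτ, one_mul]

end stepWeight

noncomputable def stepSize (H t : ℕ) : ℝ :=
  ((H : ℝ) + 1) / ((H : ℝ) + t)

namespace stepSize

variable {H : ℕ}

lemma one : stepSize H 1 = 1 := by
  simp only [stepSize, Nat.cast_one]
  exact div_self (by positivity)

lemma mem_Icc {t : ℕ} (ht : 1 ≤ t) : stepSize H t ∈ Set.Icc 0 1 := by
  have ht' : (1 : ℝ) ≤ t := by exact_mod_cast ht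
  refine ⟨by unfold stepSize; positivity, ?_⟩
  rw [stepSize, div_le_one (by positivity)]
  linarith

lemma mul_one_sub_succ_le (t : ℕ) :
    stepSize H t * (1 - stepSize H (t + 1)) ≤ stepSize H (t + 1) := by
  rcases Nat.eq_zero_or_pos (H + t) with h0 | hpos
  · obtain ⟨rfl, rfl⟩ : H = 0 ∧ t = 0 := by omega
    simp [stepSize]
  have hpos' : (0 : ℝ) < H + t := by exact_mod_cast hpos
  have hsub : 1 - stepSize H (t + 1) = t / ((H : ℝ) + t + 1) := by
    rw [stepSize]; push_cast; field_simp; ring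
  rw [hsub, stepSize, stepSize, div_mul_div_comm, div_le_div_iff₀ (by positivity) (by positivity)]
  push_cast
  have : (0 : ℝ) ≤ H := H.cast_nonneg
  nlinarith [mul_nonneg (mul_nonneg this this) (by positivity : (0 : ℝ) ≤ (H + 1) * (H + t + 1))]

lemma le_two_mul_div (hH : 1 ≤ H) {τ : ℕ} (hτ : 1 ≤ τ) : stepSize H τ ≤ 2 * H / τ := by
  have hH' : (1 : ℝ) ≤ H := by exact_mod_cast hH
  have hτ' : (1 : ℝ) ≤ τ := by exact_mod_cast hτ
  rw [stepSize, div_le_div_iff₀ (by positivity) (by positivity)]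
  nlinarith

end stepSize

/-- Property 2 of the step-size weights of Jin et al. (2018):
`Σ_{i=1}^τ (α_τ^i)² ≤ 2H/τ`. -/
theorem stepsize_weights_sq_sum_bound
    (H : ℕ) (hH : 1 ≤ H)
    (α : ℕ → ℝ) (hα : ∀ t, α t = ((H : ℝ) + 1) / ((H : ℝ) + t))
    (w : ℕ → ℕ → ℝ)
    (hw : ∀ τ i, w τ i = α i * ∏ j ∈ Icc (i + 1) τ, (1 - α j)) :
    ∀ τ : ℕ, 1 ≤ τ →
      ∑ i ∈ Icc 1 τ, (w τ i) ^ 2 ≤ 2 * (H : ℝ) / τ := by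
  obtain rfl : α = stepSize H := funext hα
  obtain rfl : w = stepWeight (stepSize H) := funext₂ hw
  intro τ hτ
  calc ∑ i ∈ Icc 1 τ, stepWeight (stepSize H) τ i ^ 2 ≤ stepSize H τ :=
        stepWeight.sum_sq_le stepSize.one (fun _ => stepSize.mem_Icc)
          stepSize.mul_one_sub_succ_le hτ
    _ ≤ 2 * H / τ := stepSize.le_two_mul_div hH hτ
end

section
/- Let A ≥ 1 and T ≥ 1 be integers and η > 0. Let ψ(x) := (1/η) Σ_a log(1/x(a)) and D_ψ(x,x') := ψ(x) − ψ(x') − ⟨∇ψ(x'), x − x'⟩ on vectors in ℝ^A with positive coordinates, where ∇ψ(x')(a) = −1/(η x'(a)). Let u := (1/A,…,1/A) be the uniform probability vector, let π* be any probability vector in ℝ^A, and let π̃ := (1 − 1/T) π* + (1/(T·A)) · 1, where 1 is the all-ones vector. Then D_ψ(π̃, u) ≤ (A · ln T)/η. -/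
open Finset Real

/-!
The gradient of the log-barrier at the uniform vector `u` is constant, so the linear term of
`D(x, u)` vanishes on probability vectors and `D(x, u) = (∑ₐ log (1 / x a) - n log n) / η`.
Mixing `π*` with weight `1 / T` into the uniform vector makes every entry at least
`1 / (T n)`, so each `log (1 / x a)` is at most `log (T n)` and `D(x, u) ≤ n log T / η`.
-/

section LogBarrier

variable {ι : Type*} [Fintype ι]

noncomputable def logBarrier (η : ℝ) (x : ι → ℝ) : ℝ :=
  1 / η * ∑ a, log (1 / x a)

noncomputable def logBarrierBregman (η : ℝ) (x y : ι → ℝ) : ℝ :=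
  logBarrier η x - logBarrier η y - ∑ a, (-(1 / (η * y a))) * (x a - y a)

lemma card_ne_zero_of_sum_eq_one {x : ι → ℝ} (hx : ∑ a, x a = 1) : (Fintype.card ι : ℝ) ≠ 0 := by
  have : Nonempty ι := by
    by_contra h
    rw [not_nonempty_iff] at h
    simp at hx
  exact Nat.cast_ne_zero.mpr Fintype.card_ne_zero

lemma sum_mul_sub_uniform_eq_zero (c : ℝ) {x : ι → ℝ} (hx : ∑ a, x a = 1) :
    ∑ a, c * (x a - 1 / Fintype.card ι) = 0 := by
  rw [← mul_sum, sum_sub_distrib, hx, sum_const, card_univ, nsmul_eq_mul,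
    mul_one_div_cancel (card_ne_zero_of_sum_eq_one hx), sub_self, mul_zero]

lemma logBarrierBregman_uniform (η : ℝ) {x : ι → ℝ} (hx : ∑ a, x a = 1) :
    logBarrierBregman η x (fun _ => 1 / Fintype.card ι) =
      1 / η * (∑ a, log (1 / x a) - Fintype.card ι * log (Fintype.card ι)) := by
  rw [logBarrierBregman, sum_mul_sub_uniform_eq_zero _ hx, sub_zero, logBarrier, logBarrier,
    mul_sub]
  simp only [one_div_one_div, sum_const, card_univ, nsmul_eq_mul]

lemma sum_log_one_div_le {x : ι → ℝ} {m : ℝ} (hm : 0 < m) (hxm : ∀ a, m ≤ x a) :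
    ∑ a, log (1 / x a) ≤ Fintype.card ι * log (1 / m) := by
  calc ∑ a, log (1 / x a) ≤ ∑ _a : ι, log (1 / m) :=
        sum_le_sum fun a _ => log_le_log (one_div_pos.mpr (hm.trans_le (hxm a)))
          (one_div_le_one_div_of_le hm (hxm a))
    _ = Fintype.card ι * log (1 / m) := by rw [sum_const, card_univ, nsmul_eq_mul]

theorem logBarrierBregman_uniform_le {η : ℝ} (hη : 0 < η) {x : ι → ℝ} (hx : ∑ a, x a = 1)
    {m : ℝ} (hm : 0 < m) (hxm : ∀ a, m ≤ x a) :
    logBarrierBregman η x (fun _ => 1 / Fintype.card ι) ≤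
      Fintype.card ι * log (1 / (Fintype.card ι * m)) / η := by
  have hn := card_ne_zero_of_sum_eq_one hx
  have hlog : log (1 / (Fintype.card ι * m)) = log (1 / m) - log (Fintype.card ι) := by
    rw [one_div, one_div, log_inv, log_inv, log_mul hn hm.ne']
    ring
  rw [logBarrierBregman_uniform η hx, hlog, one_div_mul_eq_div, mul_sub]
  gcongr
  exact sum_log_one_div_le hm hxm

end LogBarrier

section UniformMixture

variable {ι : Type*} [Fintype ι] {p : ι → ℝ} {T : ℝ}

lemma sum_mix_uniform_eq_one (hp : ∑ a, p a = 1) :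
    ∑ a, ((1 - 1 / T) * p a + 1 / (T * Fintype.card ι)) = 1 := by
  have hn := card_ne_zero_of_sum_eq_one hp
  rw [sum_add_distrib, ← mul_sum, hp, sum_const, card_univ, nsmul_eq_mul, mul_one,
    mul_one_div, mul_comm T, ← div_div, div_self hn, sub_add_cancel]

lemma le_mix_uniform (hT : 1 ≤ T) (hp : 0 ≤ p a) :
    1 / (T * Fintype.card ι) ≤ (1 - 1 / T) * p a + 1 / (T * Fintype.card ι) := by
  have : 0 ≤ 1 - 1 / T := sub_nonneg.mpr ((div_le_one (by linarith)).mpr hT)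
  exact le_add_of_nonneg_left (mul_nonneg this hp)

end UniformMixture

theorem log_barrier_divergence_to_uniform_general
    (A T : ℕ) (hT : 1 ≤ T) (η : ℝ) (hη : 0 < η)
    (ψ : (Fin A → ℝ) → ℝ)
    (hψ : ∀ x, ψ x = (1 / η) * ∑ a, Real.log (1 / x a))
    (D : (Fin A → ℝ) → (Fin A → ℝ) → ℝ)
    (hD : ∀ x x', D x x' =
      ψ x - ψ x' - ∑ a, (-(1 / (η * x' a))) * (x a - x' a))
    (u : Fin A → ℝ) (hu : ∀ a, u a = 1 / (A : ℝ))
    (πstar : Fin A → ℝ) (hπ0 : ∀ a, 0 ≤ πstar a) (hπ1 : ∑ a, πstar a = 1)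
    (πt : Fin A → ℝ)
    (hπt : ∀ a, πt a = (1 - 1 / (T : ℝ)) * πstar a + 1 / ((T : ℝ) * (A : ℝ))) :
    D πt u ≤ (A : ℝ) * Real.log T / η := by
  have hD' : D = logBarrierBregman η := by
    funext x y
    simp only [hD, hψ, logBarrierBregman, logBarrier]
  have hu' : u = fun _ => 1 / (Fintype.card (Fin A) : ℝ) := by
    funext a
    rw [hu, Fintype.card_fin]
  have hπt' : πt = fun a => (1 - 1 / (T : ℝ)) * πstar a + 1 / (T * Fintype.card (Fin A)) := by
    funext a
    rw [hπt, Fintype.card_fin]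
  have hT' : (1 : ℝ) ≤ T := by exact_mod_cast hT
  have hA : (0 : ℝ) < A := by
    simpa [pos_iff_ne_zero] using card_ne_zero_of_sum_eq_one hπ1
  have hbound := logBarrierBregman_uniform_le hη (sum_mix_uniform_eq_one hπ1)
    (by rw [Fintype.card_fin]; positivity) fun a => le_mix_uniform hT' (hπ0 a)
  have hclip : 1 / ((A : ℝ) * (1 / (T * A))) = T := by field_simp
  rw [hD', hu', hπt']
  simpa only [Fintype.card_fin, hclip] using hbound

/-- The Bregman divergence (for the log-barrier regularizer) between the clipped
comparator `π̃ = (1 - 1/T) π* + 1/(TA)·𝟙` and the uniform vector is at most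
`A ln T / η`. -/
theorem log_barrier_divergence_to_uniform
    (A T : ℕ) (hA : 1 ≤ A) (hT : 1 ≤ T) (η : ℝ) (hη : 0 < η)
    (ψ : (Fin A → ℝ) → ℝ)
    (hψ : ∀ x, ψ x = (1 / η) * ∑ a, Real.log (1 / x a))
    (D : (Fin A → ℝ) → (Fin A → ℝ) → ℝ)
    (hD : ∀ x x', D x x' =
      ψ x - ψ x' - ∑ a, (-(1 / (η * x' a))) * (x a - x' a))
    (u : Fin A → ℝ) (hu : ∀ a, u a = 1 / (A : ℝ))
    (πstar : Fin A → ℝ) (hπ0 : ∀ a, 0 ≤ πstar a) (hπ1 : ∑ a, πstar a = 1)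
    (πt : Fin A → ℝ)
    (hπt : ∀ a, πt a = (1 - 1 / (T : ℝ)) * πstar a + 1 / ((T : ℝ) * (A : ℝ))) :
    D πt u ≤ (A : ℝ) * Real.log T / η :=
  log_barrier_divergence_to_uniform_general A T hT η hη ψ hψ D hD u hu πstar hπ0 hπ1 πt hπt
end
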